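/- arXiv:2006.09533 — 3 statements merged into one kernel-verified Lean document; each statement's English description precedes it below -/
import Mathlib

section
/- Among all probability distributions p on {0,1}^{|A|} satisfying the marginal constraints p(X = v) = q_D(X = v) for every clique X of a junction tree T and every binary vector v over X, the junction-tree distribution p(A = v; T) = Π_{X ∈ V(T)} q_D(X = v_X) / Π_{Y ∈ S(T)} q_D(Y = v_Y) uniquely maximizes entropy. -/
/-!
Removing a leaf clique `l` of the junction forest divides the junction-tree distribution by
`q_l / q_S` with `S = l ∩ U'`, where `U'` is the union of the remaining cliques; by the running
intersection property `S` lies in the neighbour of `l` (or is empty). Summing out the attributes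
of `l` outside `U'` therefore gives back the distribution of the smaller forest, and induction on
the number of cliques shows that the junction-tree distribution `p_T` is normalized and has the
clique marginals of `q`.

Since `log p_T` is a sum of functions each depending only on the attributes of one clique,
`∑ p log p_T` is the same for all `p` with these clique marginals, so it equals `∑ p_T log p_T`.
Hence `H(p_T) - H(p) = KL(p ‖ p_T) ≥ 0`, with equality only for `p = p_T`.
-/

open scoped Classical

/-- A probability distribution on binary vectors over `Fin K`. -/
def IsDistribution {K : ℕ} (p : (Fin K → Bool) → ℝ) : Prop :=
  (∀ v, 0 ≤ p v) ∧ ∑ v, p v = 1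

/-- Marginal probability of the event "agrees with `v` on the itemset `X`". -/
noncomputable def margAt {K : ℕ} (p : (Fin K → Bool) → ℝ) (X : Finset (Fin K))
    (v : Fin K → Bool) : ℝ :=
  ∑ w : Fin K → Bool, if ∀ i ∈ X, w i = v i then p w else 0

/-- Frequency of an itemset: probability that all its attributes are 1. -/
noncomputable def pAll {K : ℕ} (p : (Fin K → Bool) → ℝ) (X : Finset (Fin K)) : ℝ :=
  margAt p X (fun _ => true)

/-- Empirical entropy of the marginal of `q` on the itemset `X`. -/
noncomputable def entX {K : ℕ} (q : (Fin K → Bool) → ℝ) (X : Finset (Fin K)) : ℝ :=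
  -∑ v : {i // i ∈ X} → Bool,
    (∑ w : Fin K → Bool, if ∀ i : {i // i ∈ X}, w i.1 = v i then q w else 0) *
      Real.log (∑ w : Fin K → Bool, if ∀ i : {i // i ∈ X}, w i.1 = v i then q w else 0)

/-- Entropy of a distribution on the full space. -/
noncomputable def entDist {K : ℕ} (p : (Fin K → Bool) → ℝ) : ℝ :=
  -∑ v : Fin K → Bool, p v * Real.log (p v)

def DownwardClosed {K : ℕ} (𝒢 : Finset (Finset (Fin K))) : Prop :=
  ∀ X ∈ 𝒢, ∀ Y ⊆ X, Y ∈ 𝒢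

def Covers {K : ℕ} (𝒢 : Finset (Finset (Fin K))) : Prop :=
  ∀ a : Fin K, ∃ X ∈ 𝒢, a ∈ X

/-- A junction tree (forest) over the family `𝒢`: an acyclic graph on the members of `𝒢`
whose edges join intersecting cliques, such that cliques sharing an attribute are connected,
and satisfying the running intersection property. -/
def IsJunctionTree {K : ℕ} (𝒢 : Finset (Finset (Fin K)))
    (G : SimpleGraph {C // C ∈ 𝒢}) : Prop :=
  G.IsAcyclic ∧
  (∀ X Y, G.Adj X Y → (X.1 ∩ Y.1).Nonempty) ∧
  (∀ (X Y : {C // C ∈ 𝒢}) (a : Fin K), a ∈ X.1 → a ∈ Y.1 → G.Reachable X Y) ∧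
  (∀ (X Y : {C // C ∈ 𝒢}) (a : Fin K), a ∈ X.1 → a ∈ Y.1 →
    ∀ w : G.Walk X Y, w.IsPath → ∀ Z ∈ w.support, a ∈ Z.1)

def Decomposable {K : ℕ} (𝒢 : Finset (Finset (Fin K))) : Prop :=
  ∃ G : SimpleGraph {C // C ∈ 𝒢}, IsJunctionTree 𝒢 G

noncomputable def sepEnt {K : ℕ} (q : (Fin K → Bool) → ℝ) {𝒢 : Finset (Finset (Fin K))}
    (e : Sym2 {C // C ∈ 𝒢}) : ℝ :=
  Sym2.lift ⟨fun X Y => entX q (X.1 ∩ Y.1), fun X Y => congrArg (entX q) (Finset.inter_comm _ _)⟩ e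

/-- Entropy of a junction tree: sum over cliques minus sum over separators. -/
noncomputable def treeEnt {K : ℕ} (q : (Fin K → Bool) → ℝ) (𝒢 : Finset (Finset (Fin K)))
    (G : SimpleGraph {C // C ∈ 𝒢}) : ℝ :=
  (∑ C : {C // C ∈ 𝒢}, entX q C.1) - ∑ e ∈ G.edgeFinset, sepEnt q e

/-- The junction tree distribution: product of clique marginals over product of
separator marginals. -/
noncomputable def jtDist {K : ℕ} (q : (Fin K → Bool) → ℝ) (𝒢 : Finset (Finset (Fin K)))
    (G : SimpleGraph {C // C ∈ 𝒢}) (v : Fin K → Bool) : ℝ :=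
  (∏ C : {C // C ∈ 𝒢}, margAt q C.1 v) /
    ∏ e ∈ G.edgeFinset,
      Sym2.lift ⟨fun X Y => margAt q (X.1 ∩ Y.1) v,
        fun X Y => congrArg (fun S => margAt q S v) (Finset.inter_comm _ _)⟩ e

/-- A function on full binary vectors that only depends on the attributes in `C`. -/
def DependsOnlyOn {K : ℕ} (p : (Fin K → Bool) → ℝ) (C : Finset (Fin K)) : Prop :=
  ∀ v w, (∀ i ∈ C, v i = w i) → p v = p w

/-- Empirical distribution of a dataset of `N` transactions. -/
noncomputable def empirical {K N : ℕ} (D : Fin N → (Fin K → Bool)) :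
    (Fin K → Bool) → ℝ :=
  fun v => ((Finset.univ.filter (fun t => D t = v)).card : ℝ) / N

open Finset

section SumOut

variable {K : ℕ}

noncomputable def sumOut (R : Finset (Fin K)) (f : (Fin K → Bool) → ℝ) (v : Fin K → Bool) :
    ℝ :=
  ∑ w, if ∀ i ∉ R, w i = v i then f w else 0

lemma margAt_eq_sumOut (f : (Fin K → Bool) → ℝ) (X : Finset (Fin K)) :
    margAt f X = sumOut Xᶜ f := by
  funext v
  simp only [margAt, sumOut, mem_compl, not_not]

lemma margAt_empty (f : (Fin K → Bool) → ℝ) (v : Fin K → Bool) :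
    margAt f ∅ v = ∑ w, f w := by
  simp [margAt]

lemma sumOut_empty (f : (Fin K → Bool) → ℝ) (v : Fin K → Bool) : sumOut ∅ f v = f v := by
  simp [sumOut, ← funext_iff]

lemma sumOut_sumOut {P Q : Finset (Fin K)} (hPQ : Disjoint P Q) (f : (Fin K → Bool) → ℝ)
    (v : Fin K → Bool) : sumOut P (sumOut Q f) v = sumOut (P ∪ Q) f v := by
  simp only [sumOut, ← sum_filter]
  -- as `P` and `Q` are disjoint, the intermediate vector is `u` on `P` and `v` off `P`
  rw [sum_comm' (t' := {u | ∀ i ∉ P ∪ Q, u i = v i}) (s' := fun u => {P.piecewise u v})]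
  · simp
  intro w u
  simp only [mem_filter, mem_univ, true_and, mem_singleton]
  constructor
  · rintro ⟨hwv, huw⟩
    refine ⟨funext fun i => ?_, fun i hi => ?_⟩
    · by_cases hiP : i ∈ P
      · simp [hiP, huw i (disjoint_left.1 hPQ hiP)]
      · simp [hiP, hwv i hiP]
    · rw [mem_union, not_or] at hi
      rw [huw i hi.2, hwv i hi.1]
  · rintro ⟨rfl, huv⟩
    refine ⟨fun i hi => by simp [hi], fun i hi => ?_⟩
    by_cases hiP : i ∈ P
    · simp [hiP]
    · simp [hiP, huv i (by simp [hiP, hi])]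

lemma DependsOnlyOn.mono {f : (Fin K → Bool) → ℝ} {X Y : Finset (Fin K)}
    (hf : DependsOnlyOn f X) (hXY : X ⊆ Y) : DependsOnlyOn f Y :=
  fun v w h => hf v w fun i hi => h i (hXY hi)

lemma DependsOnlyOn.div {f g : (Fin K → Bool) → ℝ} {X : Finset (Fin K)}
    (hf : DependsOnlyOn f X) (hg : DependsOnlyOn g X) : DependsOnlyOn (fun v => f v / g v) X :=
  fun v w h => by simp only [hf v w h, hg v w h]

lemma dependsOnlyOn_margAt (f : (Fin K → Bool) → ℝ) (X : Finset (Fin K)) :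
    DependsOnlyOn (margAt f X) X := by
  intro v w h
  refine sum_congr rfl fun u _ => if_congr ?_ rfl rfl
  exact forall₂_congr fun i hi => by rw [h i hi]

lemma sumOut_mul_left {f g : (Fin K → Bool) → ℝ} {X R : Finset (Fin K)}
    (hg : DependsOnlyOn g X) (hXR : Disjoint X R) (v : Fin K → Bool) :
    sumOut R (fun w => g w * f w) v = g v * sumOut R f v := by
  rw [sumOut, sumOut, mul_sum]
  refine sum_congr rfl fun w _ => ?_
  split_ifs with hw
  · rw [hg w v fun i hi => hw i (disjoint_left.1 hXR hi)]
  · rw [mul_zero]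

lemma sumOut_mul_right {f g : (Fin K → Bool) → ℝ} {X R : Finset (Fin K)}
    (hg : DependsOnlyOn g X) (hXR : Disjoint X R) (v : Fin K → Bool) :
    sumOut R (fun w => f w * g w) v = sumOut R f v * g v := by
  simp_rw [mul_comm _ (g _), sumOut_mul_left hg hXR]

lemma sumOut_margAt (f : (Fin K → Bool) → ℝ) {R X : Finset (Fin K)} (hRX : R ⊆ X)
    (v : Fin K → Bool) : sumOut R (margAt f X) v = margAt f (X \ R) v := by
  have hunion : R ∪ Xᶜ = (X \ R)ᶜ := by
    rw [sdiff_eq, compl_inf, compl_compl, union_comm, sup_eq_union]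
  rw [margAt_eq_sumOut f X, sumOut_sumOut (disjoint_compl_right_iff.2 hRX), hunion,
    margAt_eq_sumOut]

lemma margAt_eq_of_subset {p r : (Fin K → Bool) → ℝ} {S X : Finset (Fin K)}
    (hpr : ∀ v, margAt p X v = margAt r X v) (hSX : S ⊆ X) (v : Fin K → Bool) :
    margAt p S v = margAt r S v := by
  rw [← Finset.sdiff_sdiff_eq_self hSX, ← sumOut_margAt p sdiff_subset,
    ← sumOut_margAt r sdiff_subset, funext hpr]

lemma sum_mul_eq_of_margAt_eq {p r f : (Fin K → Bool) → ℝ} {X : Finset (Fin K)}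
    (hpr : ∀ v, margAt p X v = margAt r X v) (hf : DependsOnlyOn f X) :
    ∑ v, p v * f v = ∑ v, r v * f v := by
  have key : ∀ p : (Fin K → Bool) → ℝ,
      ∑ v, p v * f v = sumOut X (fun w => f w * margAt p X w) (fun _ => false) := by
    intro p
    rw [← margAt_empty _ (fun _ => false), margAt_eq_sumOut, compl_empty, ← union_compl X,
      ← sumOut_sumOut disjoint_compl_right]
    congr 1
    funext w
    rw [margAt_eq_sumOut, ← sumOut_mul_left hf disjoint_compl_right]
    simp_rw [mul_comm]
  rw [key p, key r, funext hpr]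

lemma margAt_pos {q : (Fin K → Bool) → ℝ} (hq : ∀ v, 0 < q v) (X : Finset (Fin K))
    (v : Fin K → Bool) : 0 < margAt q X v :=
  sum_pos' (fun w _ => by split_ifs <;> simp [(hq w).le]) ⟨v, mem_univ v, by simp [hq v]⟩


lemma sumOut_union_sdiff_eq_margAt_of_subset_left {q W W' : (Fin K → Bool) → ℝ}
    (hq : ∀ v, 0 < q v) {L U' S : Finset (Fin K)}
    (hW : ∀ v, W v = margAt q L v / margAt q (L ∩ U') v * W' v)
    (hW' : ∀ v, sumOut (U' \ (L ∩ U')) W' v = margAt q (L ∩ U') v) (hS : S ⊆ L)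
    (v : Fin K → Bool) : sumOut ((L ∪ U') \ S) W v = margAt q S v := by
  have hdisj : Disjoint L (U' \ (L ∩ U')) :=
    disjoint_left.2 fun a haL ha => (mem_sdiff.1 ha).2 (mem_inter.2 ⟨haL, (mem_sdiff.1 ha).1⟩)
  have hsplit : (L ∪ U') \ S = (L \ S) ∪ (U' \ (L ∩ U')) := by
    ext a
    have := @hS a
    simp only [mem_sdiff, mem_union, mem_inter]
    tauto
  have hinner : sumOut (U' \ (L ∩ U')) W = margAt q L := by
    funext w
    rw [funext hW, sumOut_mul_left ((dependsOnlyOn_margAt q L).div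
      ((dependsOnlyOn_margAt q _).mono inter_subset_left)) hdisj, hW',
      div_mul_cancel₀ _ (margAt_pos hq _ w).ne']
  rw [hsplit, ← sumOut_sumOut (hdisj.mono_left sdiff_subset), hinner,
    sumOut_margAt q sdiff_subset, Finset.sdiff_sdiff_eq_self hS]

lemma sumOut_union_sdiff_eq_margAt_of_subset_right {q W W' : (Fin K → Bool) → ℝ}
    (hq : ∀ v, 0 < q v) {L U' S : Finset (Fin K)}
    (hW : ∀ v, W v = margAt q L v / margAt q (L ∩ U') v * W' v) (hW'U' : DependsOnlyOn W' U')
    (hW' : ∀ v, sumOut (U' \ S) W' v = margAt q S v) (hS : S ⊆ U') (v : Fin K → Bool) :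
    sumOut ((L ∪ U') \ S) W v = margAt q S v := by
  have hsplit : (L ∪ U') \ S = (U' \ S) ∪ (L \ U') := by
    ext a
    have := @hS a
    simp only [mem_sdiff, mem_union]
    tauto
  have helim : sumOut (L \ U') W = W' := by
    funext w
    rw [funext hW]
    simp_rw [mul_comm_div]
    rw [sumOut_mul_right (hW'U'.div ((dependsOnlyOn_margAt q _).mono inter_subset_right))
      disjoint_sdiff, sumOut_margAt q sdiff_subset, sdiff_sdiff_self_left,
      mul_div_cancel₀ _ (margAt_pos hq _ w).ne']
  rw [hsplit, ← sumOut_sumOut (disjoint_sdiff.mono_left sdiff_subset), helim, funext hW']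

end SumOut

section Gibbs

open Real InformationTheory

lemma mul_klFun_div {p r : ℝ} (hr : 0 < r) :
    r * klFun (p / r) = p * log p - p * log r + r - p := by
  rcases eq_or_ne p 0 with rfl | hp
  · simp [klFun_zero]
  · rw [klFun_apply, log_div hp hr.ne']
    field_simp

lemma entDist_le_of_sum_mul_log_eq {K : ℕ} {p r : (Fin K → Bool) → ℝ}
    (hp : IsDistribution p) (hr : IsDistribution r) (hr_pos : ∀ v, 0 < r v)
    (hlog : ∑ v, p v * log (r v) = ∑ v, r v * log (r v)) :
    entDist p ≤ entDist r ∧ (entDist p = entDist r → p = r) := by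
  have hkl : entDist r - entDist p = ∑ v, r v * klFun (p v / r v) := by
    simp only [mul_klFun_div (hr_pos _), sum_add_distrib, sum_sub_distrib, entDist, hlog, hp.2,
      hr.2]
    ring
  have hnonneg : ∀ v, 0 ≤ r v * klFun (p v / r v) := fun v =>
    mul_nonneg (hr_pos v).le (klFun_nonneg (div_nonneg (hp.1 v) (hr_pos v).le))
  refine ⟨by linarith [sum_nonneg fun v (_ : v ∈ univ) => hnonneg v],
    fun heq => funext fun v => ?_⟩
  have hzero := (sum_eq_zero_iff_of_nonneg fun v _ => hnonneg v).1 (by linarith) v (mem_univ v)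
  rwa [mul_eq_zero, or_iff_right (hr_pos v).ne', klFun_eq_zero_iff (div_nonneg (hp.1 v)
    (hr_pos v).le), div_eq_one_iff_eq (hr_pos v).ne'] at hzero

end Gibbs

namespace SimpleGraph

variable {V : Type*} {G : SimpleGraph V}

lemma IsAcyclic.exists_neighborSet_subsingleton [Finite V] [Nonempty V] (hG : G.IsAcyclic) :
    ∃ v, (G.neighborSet v).Subsingleton := by
  obtain ⟨u, v, p, hp, hmax⟩ := Walk.exists_isPath_forall_isPath_length_le_length G
  have hpen : ∀ w, G.Adj v w → w = p.penultimate := fun w hw =>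
    hG.eq_penultimate_of_adj_end hp hw <| by
      by_contra hw'
      simpa using hmax _ _ _ (hp.concat hw' hw)
  exact ⟨v, fun w₁ hw₁ w₂ hw₂ => (hpen w₁ hw₁).trans (hpen w₂ hw₂).symm⟩

lemma Walk.IsPath.notMem_support_of_neighborSet_subsingleton {u v l : V} {p : G.Walk u v}
    (hp : p.IsPath) (hl : (G.neighborSet l).Subsingleton) (hu : u ≠ l) (hv : v ≠ l) :
    l ∉ p.support := by
  intro hlp
  obtain ⟨p₁, p₂, rfl⟩ := Walk.mem_support_iff_exists_append.1 hlp
  have hp₁ : ¬ p₁.Nil := Walk.not_nil_of_ne hu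
  have hp₂ : ¬ p₂.Nil := Walk.not_nil_of_ne hv.symm
  -- both neighbours of `l` along the path are the unique one, so the path repeats it
  have heq : p₁.penultimate = p₂.snd :=
    hl (Walk.adj_penultimate hp₁).symm (Walk.adj_snd hp₂)
  have hnodup := hp.support_nodup
  rw [Walk.support_append, List.nodup_append] at hnodup
  exact hnodup.2.2 _ (p₁.getVert_mem_support _) _ (Walk.snd_mem_tail_support hp₂) heq


lemma prod_edgeFinset_eq_mul_prod_induce [Fintype V] {M : Type*} [CommMonoid M] (l : V)
    (F : Sym2 V → M) :
    ∏ e ∈ G.edgeFinset, F e = (∏ e ∈ G.incidenceFinset l, F e) *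
      ∏ e ∈ (G.induce {l}ᶜ).edgeFinset, F (e.map Subtype.val) := by
  have hrest : G.edgeFinset.filter (l ∉ ·) = (G.induce {l}ᶜ).edgeFinset.map
      (Function.Embedding.subtype (· ∈ ({l}ᶜ : Set V))).sym2Map := by
    rw [map_edgeFinset_induce]
    ext e
    simp only [Finset.mem_filter, Finset.mem_inter, Finset.mem_sym2_iff, Set.mem_toFinset,
      Set.mem_compl_singleton_iff]
    exact and_congr_right fun _ =>
      ⟨fun h x hx => ne_of_mem_of_not_mem hx h, fun h hl => h l hl rfl⟩
  rw [← prod_filter_mul_prod_filter_not G.edgeFinset (l ∈ ·), ← incidenceFinset_eq_filter,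
    hrest, prod_map]
  rfl

lemma incidenceFinset_eq_singleton [Fintype V] {l m : V} (hl : (G.neighborSet l).Subsingleton)
    (hm : G.Adj l m) : G.incidenceFinset l = {s(l, m)} := by
  ext e
  induction e using Sym2.ind with
  | _ a b =>
    rw [mem_incidenceFinset, mk'_mem_incidenceSet_iff, Finset.mem_singleton, Sym2.eq_iff]
    constructor
    · rintro ⟨hab, rfl | rfl⟩
      · exact Or.inl ⟨rfl, hl hab hm⟩
      · exact Or.inr ⟨hl hab.symm hm, rfl⟩
    · rintro (⟨rfl, rfl⟩ | ⟨rfl, rfl⟩)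
      · exact ⟨hm, Or.inl rfl⟩
      · exact ⟨hm.symm, Or.inr rfl⟩

lemma incidenceFinset_eq_empty [Fintype V] {l : V} (hl : ∀ m, ¬ G.Adj l m) :
    G.incidenceFinset l = ∅ := by
  ext e
  induction e using Sym2.ind with
  | _ a b =>
    simp only [mem_incidenceFinset, mk'_mem_incidenceSet_iff, Finset.notMem_empty, iff_false,
      not_and, not_or]
    rintro hab
    exact ⟨by rintro rfl; exact hl b hab, by rintro rfl; exact hl a hab.symm⟩

end SimpleGraph

lemma sup_univ_eq_union_sup_compl_singleton {V α : Type*} [Fintype V] [DecidableEq α]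
    (c : V → Finset α) (l : V) :
    univ.sup c = c l ∪ univ.sup fun x : ({l}ᶜ : Set V) => c x := by
  ext a
  simp only [mem_union, mem_sup, mem_univ, true_and]
  constructor
  · rintro ⟨x, hx⟩
    by_cases hxl : x = l
    · exact Or.inl (hxl ▸ hx)
    · exact Or.inr ⟨⟨x, hxl⟩, hx⟩
  · rintro (hl | ⟨x, hx⟩)
    exacts [⟨l, hl⟩, ⟨x, hx⟩]

structure IsJunctionForest {V α : Type*} (c : V → Finset α) (G : SimpleGraph V) : Prop where
  isAcyclic : G.IsAcyclic
  reachable ⦃x y : V⦄ ⦃a : α⦄ : a ∈ c x → a ∈ c y → G.Reachable x y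
  mem_of_mem_support ⦃x y : V⦄ ⦃a : α⦄ : a ∈ c x → a ∈ c y →
    ∀ p : G.Walk x y, p.IsPath → ∀ z ∈ p.support, a ∈ c z

namespace IsJunctionForest

open SimpleGraph

variable {V α : Type*} {c : V → Finset α} {G : SimpleGraph V} {l : V}

lemma exists_adj_mem (hJ : IsJunctionForest c G) {x : V} {a : α} (hx : a ∈ c x) (hl : a ∈ c l)
    (hxl : x ≠ l) : ∃ m, G.Adj l m ∧ a ∈ c m := by
  obtain ⟨p, hp⟩ := (hJ.reachable hx hl).exists_isPath
  exact ⟨p.penultimate, (Walk.adj_penultimate (Walk.not_nil_of_ne hxl)).symm,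
    hJ.mem_of_mem_support hx hl p hp _ (p.getVert_mem_support _)⟩

lemma induce_compl_singleton (hJ : IsJunctionForest c G) (hl : (G.neighborSet l).Subsingleton) :
    IsJunctionForest (fun x : ({l}ᶜ : Set V) => c x) (G.induce {l}ᶜ) where
  isAcyclic := hJ.isAcyclic.induce _
  reachable x y _ hx hy := by
    obtain ⟨p, hp⟩ := (hJ.reachable hx hy).exists_isPath
    have hlp := hp.notMem_support_of_neighborSet_subsingleton hl x.2 y.2
    exact ⟨p.induce {l}ᶜ fun z hz => ne_of_mem_of_not_mem hz hlp⟩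
  mem_of_mem_support _ _ _ hx hy p hp z hz := by
    have hz' : (z : V) ∈ (p.map (Embedding.induce ({l}ᶜ : Set V)).toHom).support := by
      rw [Walk.support_map]
      exact List.mem_map_of_mem hz
    exact hJ.mem_of_mem_support hx hy _ (hp.map (Embedding.induce (G := G) _).injective) z hz'

variable [Fintype V] [DecidableEq α]

lemma inter_sup_compl_singleton_eq (hJ : IsJunctionForest c G)
    (hl : (G.neighborSet l).Subsingleton) {m : V} (hm : G.Adj l m) :
    c l ∩ univ.sup (fun x : ({l}ᶜ : Set V) => c x) = c l ∩ c m := by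
  ext a
  simp only [Finset.mem_inter, Finset.mem_sup, Finset.mem_univ, true_and]
  refine and_congr_right fun hal =>
    ⟨fun ⟨x, hx⟩ => ?_, fun ham => ⟨⟨m, hm.ne'⟩, ham⟩⟩
  obtain ⟨m', hm', ham'⟩ := hJ.exists_adj_mem hx hal x.2
  rwa [hl hm hm']

lemma inter_sup_compl_singleton_eq_empty (hJ : IsJunctionForest c G) (hl : ∀ m, ¬ G.Adj l m) :
    c l ∩ univ.sup (fun x : ({l}ᶜ : Set V) => c x) = ∅ := by
  ext a
  simp only [Finset.mem_inter, Finset.mem_sup, Finset.mem_univ, true_and, Finset.notMem_empty,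
    iff_false, not_and, not_exists]
  intro hal x hx
  obtain ⟨m, hm, -⟩ := hJ.exists_adj_mem hx hal x.2
  exact hl m hm

lemma inter_sup_compl_singleton_eq_empty_or_subset (hJ : IsJunctionForest c G)
    (hl : (G.neighborSet l).Subsingleton) :
    c l ∩ univ.sup (fun x : ({l}ᶜ : Set V) => c x) = ∅ ∨
      ∃ x : ({l}ᶜ : Set V), c l ∩ univ.sup (fun x : ({l}ᶜ : Set V) => c x) ⊆ c x := by
  by_cases hm : ∃ m, G.Adj l m
  · obtain ⟨m, hm⟩ := hm
    exact Or.inr ⟨⟨m, hm.ne'⟩,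
      (hJ.inter_sup_compl_singleton_eq hl hm).trans_subset inter_subset_right⟩
  · push Not at hm
    exact Or.inl (hJ.inter_sup_compl_singleton_eq_empty hm)

end IsJunctionForest

section JunctionTreeWeight

open SimpleGraph

variable {K : ℕ} {V : Type*} (q : (Fin K → Bool) → ℝ) (c : V → Finset (Fin K))

noncomputable def sepMargAt (v : Fin K → Bool) : Sym2 V → ℝ :=
  Sym2.lift ⟨fun x y => margAt q (c x ∩ c y) v,
    fun _ _ => congrArg (fun S => margAt q S v) (inter_comm _ _)⟩

variable {q c} in
lemma sepMargAt_pos (hq : ∀ v, 0 < q v) (v : Fin K → Bool) (e : Sym2 V) :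
    0 < sepMargAt q c v e :=
  Sym2.ind (fun _ _ => margAt_pos hq _ v) e

variable [Fintype V] (G : SimpleGraph V)

/-- `jtDist` with the cliques indexed by an arbitrary finite type, so that removing a leaf
clique `l` is restriction to `{l}ᶜ`. -/
noncomputable def jtWeight (v : Fin K → Bool) : ℝ :=
  (∏ x, margAt q (c x) v) / ∏ e ∈ G.edgeFinset, sepMargAt q c v e

lemma jtDist_eq_jtWeight (𝒢 : Finset (Finset (Fin K))) (G : SimpleGraph {C // C ∈ 𝒢}) :
    jtDist q 𝒢 G = jtWeight q Subtype.val G :=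
  rfl

variable {q c G}

lemma jtWeight_pos (hq : ∀ v, 0 < q v) (v : Fin K → Bool) : 0 < jtWeight q c G v :=
  div_pos (prod_pos fun _ _ => margAt_pos hq _ v) (prod_pos fun e _ => sepMargAt_pos hq v e)

lemma dependsOnlyOn_jtWeight : DependsOnlyOn (jtWeight q c G) (univ.sup c) := by
  intro v w h
  have hloc : ∀ x S, S ⊆ c x → margAt q S v = margAt q S w := fun x S hS =>
    dependsOnlyOn_margAt q S v w fun i hi => h i (le_sup (f := c) (mem_univ x) (hS hi))
  unfold jtWeight
  congr 1
  · exact prod_congr rfl fun x _ => hloc x _ subset_rfl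
  · refine prod_congr rfl fun e _ => ?_
    induction e using Sym2.ind with
    | _ x y => exact hloc x _ inter_subset_left

lemma jtWeight_eq_mul_of_neighborSet_subsingleton (hq₁ : ∑ v, q v = 1)
    (hJ : IsJunctionForest c G) {l : V} (hl : (G.neighborSet l).Subsingleton) (v : Fin K → Bool) :
    jtWeight q c G v =
      margAt q (c l) v / margAt q (c l ∩ univ.sup fun x : ({l}ᶜ : Set V) => c x) v *
        jtWeight q (fun x : ({l}ᶜ : Set V) => c x) (G.induce {l}ᶜ) v := by
  have hsep : ∏ e ∈ G.incidenceFinset l, sepMargAt q c v e =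
      margAt q (c l ∩ univ.sup fun x : ({l}ᶜ : Set V) => c x) v := by
    by_cases hm : ∃ m, G.Adj l m
    · obtain ⟨m, hm⟩ := hm
      rw [incidenceFinset_eq_singleton hl hm, prod_singleton,
        hJ.inter_sup_compl_singleton_eq hl hm]
      rfl
    · push Not at hm
      rw [incidenceFinset_eq_empty hm, prod_empty, hJ.inter_sup_compl_singleton_eq_empty hm,
        margAt_empty, hq₁]
  unfold jtWeight
  rw [Fintype.prod_eq_mul_prod_compl l, prod_edgeFinset_eq_mul_prod_induce l, hsep,
    mul_div_mul_comm, prod_subtype ({l}ᶜ : Finset V) (p := (· ∈ ({l}ᶜ : Set V))) (by simp)]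
  congr 2
  refine prod_congr rfl fun e _ => ?_
  induction e using Sym2.ind with
  | _ x y => rfl

end JunctionTreeWeight

section JunctionTreeMarginals

variable {K : ℕ} {q : (Fin K → Bool) → ℝ}

theorem sumOut_jtWeight (hq₁ : ∑ v, q v = 1) (hq : ∀ v, 0 < q v) {V : Type*} [Fintype V]
    {c : V → Finset (Fin K)} {G : SimpleGraph V} (hJ : IsJunctionForest c G)
    {S : Finset (Fin K)} (hS : S = ∅ ∨ ∃ x, S ⊆ c x) (v : Fin K → Bool) :
    sumOut (univ.sup c \ S) (jtWeight q c G) v = margAt q S v := by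
  induction h : Fintype.card V using Nat.strong_induction_on generalizing V S v with
  | _ n ih => ?_
  rcases isEmpty_or_nonempty V with hV | hV
  · obtain rfl : S = ∅ := hS.resolve_right fun ⟨x, _⟩ => hV.elim x
    simp [jtWeight, sumOut_empty, margAt_empty, hq₁, eq_empty_of_isEmpty G.edgeFinset]
  obtain ⟨l, hl⟩ := hJ.isAcyclic.exists_neighborSet_subsingleton
  have hcard : Fintype.card ({l}ᶜ : Set V) < n :=
    h ▸ Fintype.card_subtype_lt (p := (· ∈ ({l}ᶜ : Set V))) (x := l) (by simp)
  have hrest := fun {S} hS w => ih _ hcard (hJ.induce_compl_singleton hl) (S := S) hS w rfl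
  have hS' : S ⊆ c l ∨ S = ∅ ∨ ∃ x : ({l}ᶜ : Set V), S ⊆ c x := by
    rcases hS with rfl | ⟨x, hx⟩
    · exact Or.inr (Or.inl rfl)
    by_cases hxl : x = l
    exacts [Or.inl (hxl ▸ hx), Or.inr (Or.inr ⟨⟨x, hxl⟩, hx⟩)]
  have hfac := jtWeight_eq_mul_of_neighborSet_subsingleton hq₁ hJ hl
  rw [sup_univ_eq_union_sup_compl_singleton c l]
  rcases hS' with hSl | hS'
  · exact sumOut_union_sdiff_eq_margAt_of_subset_left hq hfac
      (hrest (hJ.inter_sup_compl_singleton_eq_empty_or_subset hl)) hSl v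
  · refine sumOut_union_sdiff_eq_margAt_of_subset_right hq hfac dependsOnlyOn_jtWeight
      (hrest hS') ?_ v
    rcases hS' with rfl | ⟨x, hx⟩
    exacts [empty_subset _, hx.trans (le_sup (f := fun x : ({l}ᶜ : Set V) => c x) (mem_univ x))]

theorem margAt_jtWeight (hq₁ : ∑ v, q v = 1) (hq : ∀ v, 0 < q v) {V : Type*} [Fintype V]
    {c : V → Finset (Fin K)} {G : SimpleGraph V} (hJ : IsJunctionForest c G)
    (hcov : univ.sup c = univ) {S : Finset (Fin K)} (hS : S = ∅ ∨ ∃ x, S ⊆ c x)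
    (v : Fin K → Bool) : margAt (jtWeight q c G) S v = margAt q S v := by
  rw [margAt_eq_sumOut, compl_eq_univ_sdiff, ← hcov, sumOut_jtWeight hq₁ hq hJ hS]

lemma log_jtWeight (hq : ∀ v, 0 < q v) {V : Type*} [Fintype V] (c : V → Finset (Fin K))
    (G : SimpleGraph V) (v : Fin K → Bool) :
    Real.log (jtWeight q c G v) = ∑ x, Real.log (margAt q (c x) v) -
      ∑ e ∈ G.edgeFinset, Real.log (sepMargAt q c v e) := by
  rw [jtWeight, Real.log_div (prod_pos fun _ _ => margAt_pos hq _ v).ne'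
    (prod_pos fun e _ => sepMargAt_pos hq v e).ne',
    Real.log_prod fun _ _ => (margAt_pos hq _ v).ne',
    Real.log_prod fun e _ => (sepMargAt_pos hq v e).ne']

theorem sum_mul_log_jtWeight_eq (hq : ∀ v, 0 < q v) {V : Type*} [Fintype V]
    {c : V → Finset (Fin K)} (G : SimpleGraph V) {p r : (Fin K → Bool) → ℝ}
    (hpr : ∀ x v, margAt p (c x) v = margAt r (c x) v) :
    ∑ v, p v * Real.log (jtWeight q c G v) = ∑ v, r v * Real.log (jtWeight q c G v) := by
  have hexpand : ∀ p : (Fin K → Bool) → ℝ, ∑ v, p v * Real.log (jtWeight q c G v) =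
      ∑ x, ∑ v, p v * Real.log (margAt q (c x) v) -
        ∑ e ∈ G.edgeFinset, ∑ v, p v * Real.log (sepMargAt q c v e) := fun p => by
    simp_rw [log_jtWeight hq, mul_sub, mul_sum, sum_sub_distrib]
    exact congrArg₂ _ sum_comm sum_comm
  have hloc : ∀ x S, S ⊆ c x →
      ∑ v, p v * Real.log (margAt q S v) = ∑ v, r v * Real.log (margAt q S v) := fun x S hS =>
    sum_mul_eq_of_margAt_eq (margAt_eq_of_subset (hpr x) hS) fun v w h => by
      rw [dependsOnlyOn_margAt q S v w h]
  rw [hexpand p, hexpand r]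
  congr 1
  · exact sum_congr rfl fun x _ => hloc x _ subset_rfl
  · refine sum_congr rfl fun e _ => ?_
    induction e using Sym2.ind with
    | _ x y => exact hloc x _ inter_subset_left

end JunctionTreeMarginals

/-- The junction-tree distribution uniquely maximizes entropy among all
distributions with the prescribed clique marginals. -/
theorem jtDist_maxent_unique {K : ℕ} (q : (Fin K → Bool) → ℝ)
    (hq : IsDistribution q) (hpos : ∀ v, 0 < q v)
    (𝒢 : Finset (Finset (Fin K))) (hcov : Covers 𝒢)
    (G : SimpleGraph {C // C ∈ 𝒢}) (hG : IsJunctionTree 𝒢 G) :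
    (IsDistribution (jtDist q 𝒢 G) ∧
      ∀ C : {C // C ∈ 𝒢}, ∀ v, margAt (jtDist q 𝒢 G) C.1 v = margAt q C.1 v) ∧
    ∀ p : (Fin K → Bool) → ℝ, IsDistribution p →
      (∀ C : {C // C ∈ 𝒢}, ∀ v, margAt p C.1 v = margAt q C.1 v) →
      entDist p ≤ entDist (jtDist q 𝒢 G) ∧
        (entDist p = entDist (jtDist q 𝒢 G) → p = jtDist q 𝒢 G) := by
  rw [jtDist_eq_jtWeight]
  have hJ : IsJunctionForest Subtype.val G := ⟨hG.1, hG.2.2.1, hG.2.2.2⟩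
  have hcov' : univ.sup (Subtype.val : {C // C ∈ 𝒢} → Finset (Fin K)) = univ :=
    eq_univ_of_forall fun a => by
      obtain ⟨X, hX, ha⟩ := hcov a
      exact mem_sup.2 ⟨⟨X, hX⟩, mem_univ _, ha⟩
  have hmarg : ∀ (C : {C // C ∈ 𝒢}) v,
      margAt (jtWeight q Subtype.val G) C.1 v = margAt q C.1 v := fun C =>
    margAt_jtWeight hq.2 hpos hJ hcov' (Or.inr ⟨C, subset_rfl⟩)
  have hdist : IsDistribution (jtWeight q Subtype.val G) := by
    refine ⟨fun v => (jtWeight_pos hpos v).le, ?_⟩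
    rw [← margAt_empty _ (fun _ => false), margAt_jtWeight hq.2 hpos hJ hcov' (Or.inl rfl),
      margAt_empty, hq.2]
  refine ⟨⟨hdist, hmarg⟩, fun p hp hpq => ?_⟩
  exact entDist_le_of_sum_mul_log_eq hp hdist (jtWeight_pos hpos)
    (sum_mul_log_jtWeight_eq hpos G fun C v => (hpq C v).trans (hmarg C v).symm)
end

section
/- Let T be a junction tree and let X and Y be cliques of T with a ∈ X ∩ Y. Suppose the path P in T from X to Y contains an edge (Z, W) whose separator Z ∩ W has size |X ∩ Y|. Then Z ∩ W = X ∩ Y, and the tree obtained from T by deleting edge (Z, W) and adding edge (X, Y) is again a junction tree. -/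
open scoped Classical

/-!
By the running intersection property every clique on the path from `X` to `Y` contains
`X ∩ Y`, so `X ∩ Y ⊆ Z ∩ W`, and equal cardinalities force equality. Deleting the edge `(Z, W)`
separates `X` from `Y`, so adding the edge `(X, Y)` leaves a forest. If cliques sharing `c` were
joined through cliques containing `c` by a walk using `(Z, W)`, then `c ∈ Z ∩ W = X ∩ Y`, so `c`
lies in every clique of the path, and the walk can be rerouted from `Z` back along the path to
`X`, across the new edge to `Y`, and along the path to `W`. Since paths in a forest are unique,
this yields the running intersection property of the new tree.
-/

namespace SimpleGraph

variable {V : Type*} {G H : SimpleGraph V} {S : Set V} {u v x y : V}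

def ReachableWithin (G : SimpleGraph V) (S : Set V) (u v : V) : Prop :=
  ∃ p : G.Walk u v, ∀ z ∈ p.support, z ∈ S

theorem ReachableWithin.reachable (h : G.ReachableWithin S u v) : G.Reachable u v :=
  h.elim fun p _ => ⟨p⟩

theorem ReachableWithin.symm (h : G.ReachableWithin S u v) : G.ReachableWithin S v u := by
  obtain ⟨p, hp⟩ := h
  exact ⟨p.reverse, by simpa using hp⟩

theorem ReachableWithin.trans {w : V} (h₁ : G.ReachableWithin S u v)
    (h₂ : G.ReachableWithin S v w) : G.ReachableWithin S u w := by
  obtain ⟨p, hp⟩ := h₁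
  obtain ⟨q, hq⟩ := h₂
  exact ⟨p.append q, fun z hz => (Walk.mem_support_append_iff p q).1 hz |>.elim (hp z) (hq z)⟩

theorem Adj.reachableWithin (h : G.Adj u v) (hu : u ∈ S) (hv : v ∈ S) :
    G.ReachableWithin S u v :=
  ⟨.cons h .nil, by simp [hu, hv]⟩

theorem ReachableWithin.mono (hle : G ≤ H) (h : G.ReachableWithin S u v) :
    H.ReachableWithin S u v := by
  obtain ⟨p, hp⟩ := h
  exact ⟨p.mapLe hle, by simpa [Walk.support_mapLe_eq_support] using hp⟩

theorem Walk.reachableWithin_deleteEdges {e : Sym2 V} (p : G.Walk u v)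
    (hS : ∀ z ∈ p.support, z ∈ S) (he : e ∉ p.edges) : (G.deleteEdges {e}).ReachableWithin S u v :=
  ⟨p.toDeleteEdge e he, by simpa [Walk.toDeleteEdges, Walk.support_transfer] using hS⟩

theorem Walk.reachableWithin_of_forall_adj
    (hG : ∀ a b, G.Adj a b → a ∈ S → b ∈ S → H.ReachableWithin S a b) :
    ∀ {u v : V} (p : G.Walk u v), (∀ z ∈ p.support, z ∈ S) → H.ReachableWithin S u v
  | _, _, .nil, hS => ⟨.nil, hS⟩
  | _, _, .cons h p, hS => by
    simp only [Walk.support_cons, List.mem_cons, forall_eq_or_imp] at hS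
    exact (hG _ _ h hS.1 (hS.2 _ p.start_mem_support)).trans
      (p.reachableWithin_of_forall_adj hG hS.2)

theorem ReachableWithin.of_deleteEdges_le {a b : V} (hle : G.deleteEdges {s(a, b)} ≤ H)
    (hab : a ∈ S → b ∈ S → H.ReachableWithin S a b) (h : G.ReachableWithin S u v) :
    H.ReachableWithin S u v := by
  obtain ⟨p, hp⟩ := h
  refine p.reachableWithin_of_forall_adj (fun c d hcd hc hd => ?_) hp
  by_cases hcd' : s(c, d) = s(a, b)
  · rcases Sym2.eq_iff.1 hcd' with ⟨rfl, rfl⟩ | ⟨rfl, rfl⟩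
    exacts [hab hc hd, (hab hd hc).symm]
  · exact (hle ((deleteEdges_adj ..).2 ⟨hcd, hcd'⟩)).reachableWithin hc hd

theorem IsAcyclic.support_subset_of_reachableWithin (hG : G.IsAcyclic)
    (h : G.ReachableWithin S u v) {p : G.Walk u v} (hp : p.IsPath) : ∀ z ∈ p.support, z ∈ S := by
  obtain ⟨q, hq⟩ := h
  have : p = q.bypass := congrArg Subtype.val ((hG.subsingleton_path u v).elim ⟨p, hp⟩ q.toPath)
  exact fun z hz => hq z (q.support_bypass_subset_support (this ▸ hz))

theorem Walk.exists_eq_append_cons_of_mem_darts :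
    ∀ {u v : V} (p : G.Walk u v) {d : G.Dart}, d ∈ p.darts →
      ∃ (p₁ : G.Walk u d.fst) (p₂ : G.Walk d.snd v), p = p₁.append (.cons d.adj p₂)
  | _, _, .nil, _, hd => by simp at hd
  | _, _, .cons h p, d, hd => by
    rcases List.mem_cons.1 hd with rfl | hd
    · exact ⟨.nil, p, rfl⟩
    · obtain ⟨p₁, p₂, rfl⟩ := p.exists_eq_append_cons_of_mem_darts hd
      exact ⟨.cons h p₁, p₂, rfl⟩

theorem fromEdgeSet_insert_edgeSet_diff (e : Sym2 V) (x y : V) :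
    fromEdgeSet (insert s(x, y) (G.edgeSet \ {e})) = G.deleteEdges {e} ⊔ edge x y := by
  ext a b
  simp only [fromEdgeSet_adj, Set.mem_insert_iff, Set.mem_sdiff, mem_edgeSet,
    Set.mem_singleton_iff, sup_adj, deleteEdges_adj, edge_adj, Sym2.eq_iff]
  constructor
  · rintro ⟨h | h, hab⟩
    exacts [Or.inr ⟨h, hab⟩, Or.inl h]
  · rintro (h | h)
    exacts [⟨Or.inr h, h.1.ne⟩, ⟨Or.inl h.1, h.2⟩]

variable {w : G.Walk x y} {d : G.Dart}

/-- Without `d.edge`, the endpoints `x` and `y` of the path lie in different components. -/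
theorem IsAcyclic.deleteEdges_sup_edge (hG : G.IsAcyclic) (hw : w.IsPath) (hd : d ∈ w.darts) :
    (G.deleteEdges {d.edge} ⊔ edge x y).IsAcyclic := by
  refine (hG.anti (deleteEdges_le _)).sup_edge_of_not_reachable fun hxy => ?_
  obtain ⟨p, hp⟩ := reachable_deleteEdges_iff_exists_walk.1 hxy
  have : p.bypass = w := congrArg Subtype.val ((hG.subsingleton_path x y).elim p.toPath ⟨w, hw⟩)
  exact hp (p.edges_bypass_subset_edges (this ▸ List.mem_map_of_mem hd))

theorem Walk.IsPath.reachableWithin_deleteEdges_sup_edge (hw : w.IsPath) (hd : d ∈ w.darts)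
    (hxy : x ≠ y) (hS : ∀ z ∈ w.support, z ∈ S) :
    (G.deleteEdges {d.edge} ⊔ edge x y).ReachableWithin S d.fst d.snd := by
  obtain ⟨p, q, rfl⟩ := w.exists_eq_append_cons_of_mem_darts hd
  have hnodup := hw.isTrail.edges_nodup
  simp only [Walk.edges_append, Walk.edges_cons, List.nodup_append', List.nodup_cons] at hnodup
  have hpS : ∀ z ∈ p.support, z ∈ S := fun z hz => hS z (by simp [hz])
  have hqS : ∀ z ∈ q.support, z ∈ S := fun z hz => hS z (by simp [hz])
  have hZX : (G.deleteEdges {d.edge} ⊔ edge x y).ReachableWithin S d.fst x :=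
    ((p.reachableWithin_deleteEdges hpS fun h => hnodup.2.2 h List.mem_cons_self).mono
      le_sup_left).symm
  have hXY : (G.deleteEdges {d.edge} ⊔ edge x y).ReachableWithin S x y :=
    Adj.reachableWithin (.inr ((edge_adj ..).2 ⟨by simp, hxy⟩)) (hpS _ p.start_mem_support)
      (hqS _ q.end_mem_support)
  have hYW : (G.deleteEdges {d.edge} ⊔ edge x y).ReachableWithin S y d.snd :=
    ((q.reachableWithin_deleteEdges hqS hnodup.2.1.1).mono le_sup_left).symm
  exact (hZX.trans hXY).trans hYW

end SimpleGraph

open SimpleGraph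

section JunctionTree

variable {K : ℕ} {𝒢 : Finset (Finset (Fin K))} {G : SimpleGraph {C // C ∈ 𝒢}}

theorem isJunctionTree_iff : IsJunctionTree 𝒢 G ↔ G.IsAcyclic ∧
    (∀ X Y, G.Adj X Y → (X.1 ∩ Y.1).Nonempty) ∧
    ∀ (X Y : {C // C ∈ 𝒢}) (a : Fin K), a ∈ X.1 → a ∈ Y.1 →
      G.ReachableWithin {Z | a ∈ Z.1} X Y := by
  constructor
  · rintro ⟨hac, hadj, hreach, hrip⟩
    refine ⟨hac, hadj, fun X Y a hX hY => ?_⟩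
    obtain ⟨p⟩ := hreach X Y a hX hY
    exact ⟨p.bypass, hrip X Y a hX hY _ p.bypass_isPath⟩
  · rintro ⟨hac, hadj, hwithin⟩
    exact ⟨hac, hadj, fun X Y a hX hY => (hwithin X Y a hX hY).reachable,
      fun X Y a hX hY _ hp => hac.support_subset_of_reachableWithin (hwithin X Y a hX hY) hp⟩

theorem IsJunctionTree.inter_subset_of_mem_support (hG : IsJunctionTree 𝒢 G) {X Y Z : {C // C ∈ 𝒢}}
    {w : G.Walk X Y} (hw : w.IsPath) (hZ : Z ∈ w.support) : X.1 ∩ Y.1 ⊆ Z.1 := fun a ha =>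
  hG.2.2.2 X Y a (Finset.mem_inter.1 ha).1 (Finset.mem_inter.1 ha).2 w hw Z hZ

end JunctionTree

/-- If an edge `(Z, W)` on the path from `X` to `Y` has a separator of the same
size as `X ∩ Y`, then `Z ∩ W = X ∩ Y` and swapping the edge `(Z, W)` for the edge `(X, Y)`
again yields a junction tree. -/
theorem edge_swap {K : ℕ} (𝒢 : Finset (Finset (Fin K)))
    (G : SimpleGraph {C // C ∈ 𝒢}) (hG : IsJunctionTree 𝒢 G)
    (X Y : {C // C ∈ 𝒢}) (hne : X ≠ Y) (a : Fin K) (ha : a ∈ X.1 ∩ Y.1)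
    (w : G.Walk X Y) (hw : w.IsPath) (d : G.Dart) (hd : d ∈ w.darts)
    (hcard : ((d.toProd.1).1 ∩ (d.toProd.2).1).card = (X.1 ∩ Y.1).card) :
    (d.toProd.1).1 ∩ (d.toProd.2).1 = X.1 ∩ Y.1 ∧
    IsJunctionTree 𝒢
      (SimpleGraph.fromEdgeSet
        (insert s(X, Y) (G.edgeSet \ {s(d.toProd.1, d.toProd.2)}))) := by
  have hsub : X.1 ∩ Y.1 ⊆ d.fst.1 ∩ d.snd.1 := Finset.subset_inter
    (hG.inter_subset_of_mem_support hw (w.dart_fst_mem_support_of_mem_darts hd))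
    (hG.inter_subset_of_mem_support hw (w.dart_snd_mem_support_of_mem_darts hd))
  have hsep := (Finset.eq_of_subset_of_card_le hsub hcard.le).symm
  obtain ⟨hac, hadj, hwithin⟩ := isJunctionTree_iff.1 hG
  refine ⟨hsep, ?_⟩
  rw [fromEdgeSet_insert_edgeSet_diff, isJunctionTree_iff]
  refine ⟨hac.deleteEdges_sup_edge hw hd, ?_, fun U V c hU hV => ?_⟩
  · intro U V h
    rw [sup_adj, edge_adj] at h
    rcases h with h | ⟨⟨rfl, rfl⟩ | ⟨rfl, rfl⟩, -⟩
    exacts [hadj U V h.1, ⟨a, ha⟩, Finset.inter_comm V.1 U.1 ▸ ⟨a, ha⟩]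
  · refine (hwithin U V c hU hV).of_deleteEdges_le le_sup_left fun hZ hW => ?_
    -- `c` lies in the separator, hence in `X ∩ Y`, hence in every clique on the path `w`
    have hc : c ∈ X.1 ∩ Y.1 := hsep ▸ Finset.mem_inter.2 ⟨hZ, hW⟩
    exact hw.reachableWithin_deleteEdges_sup_edge hd hne
      fun Z hZ => hG.inter_subset_of_mem_support hw hZ hc
end

section
/- For the Chow–Liu problem: among all downward closed families of itemsets over A whose maximal sets have size at most 2 and which are decomposable, a family minimizing the entropy H(T) = Σ_{X ∈ V(T)} H(X) − Σ_{Y ∈ S(T)} H(Y) of its junction tree is obtained by a maximum-weight spanning forest of the graph on A with edge weights w(a,b) = H(a) + H(b) − H(ab) (the mutual information between a and b). -/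
/-!
In a junction tree whose cliques have at most two elements every separator is a singleton, and
the edges with separator `{a}` form a spanning tree of the cliques containing `a`; there are
`deg a` of them, the degree being taken in the graph `P` of two-element cliques. Hence the entropy
of every such tree is `∑ₐ H(a) - w(P)`. The running intersection property forces `P` to be
acyclic, so `w(P) ≤ w(F)`. For the family of `F` itself, the subdivision of `F` (each singleton
joined to the pairs containing it) is a junction tree, and there `P = F`.
-/

open scoped Classical

noncomputable def wsum {K : ℕ} (q : (Fin K → Bool) → ℝ) (F : SimpleGraph (Fin K)) : ℝ :=
  ∑ e ∈ F.edgeFinset,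
    Sym2.lift ⟨fun a b => entX q {a} + entX q {b} - entX q {a, b},
      fun a b => by
        show entX q {a} + entX q {b} - entX q {a, b} =
          entX q {b} + entX q {a} - entX q {b, a}
        rw [Finset.pair_comm]; ring⟩ e

noncomputable def famOf {K : ℕ} (F : SimpleGraph (Fin K)) : Finset (Finset (Fin K)) :=
  (Finset.univ.image fun a => ({a} : Finset (Fin K))) ∪
    F.edgeFinset.image
      (Sym2.lift ⟨fun a b => ({a, b} : Finset (Fin K)), fun a b => Finset.pair_comm a b⟩)

open Finset

theorem Finset.sum_sum_eq_sum_card_filter_nsmul {ι α M : Type*} [Fintype α] [DecidableEq α]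
    [AddCommMonoid M] (s : Finset ι) (t : ι → Finset α) (g : α → M) :
    ∑ i ∈ s, ∑ a ∈ t i, g a = ∑ a, #{i ∈ s | a ∈ t i} • g a := by
  rw [Finset.sum_comm' (t' := univ) (s' := fun a => {i ∈ s | a ∈ t i}) (by simp)]
  simp only [sum_const]

theorem Finset.eq_pair_of_card_le_two {α : Type*} [DecidableEq α] {C : Finset α} {a b : α}
    (ha : a ∈ C) (hb : b ∈ C) (hab : a ≠ b) (hC : #C ≤ 2) : C = {a, b} :=
  (eq_of_subset_of_card_le (insert_subset ha (singleton_subset_iff.2 hb))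
    (by rw [card_pair hab]; exact hC)).symm

theorem Sym2.toFinset_injective {α : Type*} [DecidableEq α] :
    Function.Injective (Sym2.toFinset : Sym2 α → Finset α) := fun _ _ h =>
  Sym2.ext fun a => by rw [← Sym2.mem_toFinset, h, Sym2.mem_toFinset]

namespace SimpleGraph

variable {V : Type*} {G : SimpleGraph V}

theorem IsAcyclic.eq_bypass_of_isPath (hG : G.IsAcyclic) {u v : V} {p : G.Walk u v}
    (hp : p.IsPath) (w : G.Walk u v) : p = w.bypass :=
  congrArg Subtype.val ((hG.subsingleton_path u v).elim ⟨p, hp⟩ ⟨w.bypass, w.bypass_isPath⟩)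

theorem IsAcyclic.support_subset_of_isPath (hG : G.IsAcyclic) {u v : V} {p : G.Walk u v}
    (hp : p.IsPath) (w : G.Walk u v) : p.support ⊆ w.support :=
  hG.eq_bypass_of_isPath hp w ▸ w.support_bypass_subset_support

theorem IsAcyclic.edges_subset_of_isPath (hG : G.IsAcyclic) {u v : V} {p : G.Walk u v}
    (hp : p.IsPath) (w : G.Walk u v) : p.edges ⊆ w.edges :=
  hG.eq_bypass_of_isPath hp w ▸ w.edges_bypass_subset_edges

theorem Reachable.map_of_forall_adj {W : Type*} {H : SimpleGraph W} (f : V → W)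
    (hf : ∀ u v, G.Adj u v → H.Reachable (f u) (f v)) {u v : V} (h : G.Reachable u v) :
    H.Reachable (f u) (f v) := by
  obtain ⟨p⟩ := h
  induction p with
  | nil => rfl
  | cons hadj _ ih => exact (hf _ _ hadj).trans ih

theorem sum_edgeFinset_sum_toFinset [Fintype V] [DecidableEq V] [DecidableRel G.Adj]
    {M : Type*} [AddCommMonoid M] (g : V → M) :
    ∑ e ∈ G.edgeFinset, ∑ v ∈ e.toFinset, g v = ∑ v, G.degree v • g v := by
  rw [Finset.sum_sum_eq_sum_card_filter_nsmul]
  refine Finset.sum_congr rfl fun v _ => ?_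
  simp only [Sym2.mem_toFinset, ← incidenceFinset_eq_filter, card_incidenceFinset_eq_degree]

end SimpleGraph

section PairGraph

variable {α : Type*} [DecidableEq α] {𝒢 : Finset (Finset α)}

def pairGraph (𝒢 : Finset (Finset α)) : SimpleGraph α :=
  SimpleGraph.fromEdgeSet {e | e.toFinset ∈ 𝒢}

theorem pairGraph_adj {a b : α} : (pairGraph 𝒢).Adj a b ↔ {a, b} ∈ 𝒢 ∧ a ≠ b := by
  simp [pairGraph, Sym2.toFinset_mk_eq]

theorem mem_edgeSet_pairGraph {e : Sym2 α} :
    e ∈ (pairGraph 𝒢).edgeSet ↔ e.toFinset ∈ 𝒢 ∧ #e.toFinset = 2 := by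
  simp [pairGraph, Sym2.card_toFinset]

variable [Fintype α]

theorem image_toFinset_edgeFinset_pairGraph [DecidableRel (pairGraph 𝒢).Adj] :
    (pairGraph 𝒢).edgeFinset.image Sym2.toFinset = {C ∈ 𝒢 | #C = 2} := by
  ext C
  simp only [mem_image, SimpleGraph.mem_edgeFinset, mem_edgeSet_pairGraph, mem_filter]
  constructor
  · rintro ⟨e, he, rfl⟩
    exact he
  · rintro ⟨hC, hC2⟩
    obtain ⟨a, b, -, rfl⟩ := Finset.card_eq_two.mp hC2
    exact ⟨s(a, b), by rw [Sym2.toFinset_mk_eq]; exact ⟨hC, hC2⟩, Sym2.toFinset_mk_eq⟩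

theorem sum_eq_sum_singleton_add_sum_edgeFinset_pairGraph [DecidableRel (pairGraph 𝒢).Adj]
    {M : Type*} [AddCommMonoid M] {φ : Finset α → M} (hφ : φ ∅ = 0)
    (hsingle : ∀ a, {a} ∈ 𝒢) (hcard : ∀ C ∈ 𝒢, #C ≤ 2) :
    ∑ C ∈ 𝒢, φ C = ∑ a, φ {a} + ∑ e ∈ (pairGraph 𝒢).edgeFinset, φ e.toFinset := by
  have hsmall : ∑ C ∈ 𝒢 with #C ≠ 2, φ C = ∑ a, φ {a} := by
    rw [← Finset.sum_image (fun a _ b _ h => Finset.singleton_injective h)]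
    refine (Finset.sum_subset (fun C hC => ?_) fun C hC hC' => ?_).symm
    · obtain ⟨a, -, rfl⟩ := mem_image.mp hC
      simpa using hsingle a
    · obtain ⟨hC𝒢, hC2⟩ := mem_filter.mp hC
      have : #C ≠ 1 := fun h1 => hC' (by
        obtain ⟨a, rfl⟩ := card_eq_one.mp h1
        exact mem_image_of_mem _ (mem_univ a))
      have := hcard C hC𝒢
      rw [card_eq_zero.mp (show #C = 0 by omega), hφ]
  rw [← Finset.sum_filter_not_add_sum_filter 𝒢 (fun C => #C = 2), hsmall,
    ← image_toFinset_edgeFinset_pairGraph,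
    Finset.sum_image fun _ _ _ _ h => Sym2.toFinset_injective h]

theorem card_filter_mem_eq_degree_pairGraph_add_one [DecidableRel (pairGraph 𝒢).Adj] {a : α}
    (ha : {a} ∈ 𝒢) (hcard : ∀ C ∈ 𝒢, #C ≤ 2) :
    #{C ∈ 𝒢 | a ∈ C} = (pairGraph 𝒢).degree a + 1 := by
  have hdecomp : {C ∈ 𝒢 | a ∈ C} =
      insert {a} (((pairGraph 𝒢).neighborFinset a).image fun b => {a, b}) := by
    ext C
    simp only [mem_filter, mem_insert, mem_image, SimpleGraph.mem_neighborFinset, pairGraph_adj]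
    constructor
    · rintro ⟨hC, haC⟩
      by_cases hCa : C = {a}
      · exact Or.inl hCa
      obtain ⟨b, hbC, hba⟩ := (Finset.eq_singleton_or_nontrivial haC).resolve_left hCa
        |>.exists_ne a
      have hCab := Finset.eq_pair_of_card_le_two haC hbC (Ne.symm hba) (hcard C hC)
      exact Or.inr ⟨b, ⟨hCab ▸ hC, Ne.symm hba⟩, hCab.symm⟩
    · rintro (rfl | ⟨b, ⟨hb, -⟩, rfl⟩)
      · simpa using ha
      · simpa using hb
  rw [hdecomp, card_insert_of_notMem, card_image_of_injOn,
    SimpleGraph.card_neighborFinset_eq_degree]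
  · intro b hb b' _ h
    have : b ∈ ({a, b'} : Finset α) := by rw [← show ({a, b} : Finset α) = {a, b'} from h]; simp
    simp only [mem_insert, mem_singleton] at this
    exact this.resolve_left (pairGraph_adj.1 ((SimpleGraph.mem_neighborFinset _ _ _).1 hb)).2.symm
  · simp only [mem_image, SimpleGraph.mem_neighborFinset, not_exists, not_and]
    intro b hb h
    have : b ∈ ({a} : Finset α) := by rw [← h]; simp
    exact (pairGraph_adj.1 hb).2 (mem_singleton.1 this).symm

end PairGraph

section JunctionTree

open SimpleGraph

variable {K : ℕ} {𝒢 : Finset (Finset (Fin K))} {G : SimpleGraph {C // C ∈ 𝒢}}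

def separator : Sym2 {C // C ∈ 𝒢} → Finset (Fin K) :=
  Sym2.lift ⟨fun X Y => X.1 ∩ Y.1, fun _ _ => Finset.inter_comm _ _⟩

theorem mem_separator {a : Fin K} {e : Sym2 {C // C ∈ 𝒢}} :
    a ∈ separator e ↔ ∀ X ∈ e, a ∈ X.1 := by
  induction e using Sym2.ind with
  | _ X Y => simp [separator]

theorem sepEnt_eq_entX_separator (q : (Fin K → Bool) → ℝ) (e : Sym2 {C // C ∈ 𝒢}) :
    sepEnt q e = entX q (separator e) := by
  induction e using Sym2.ind with
  | _ X Y => rfl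

theorem mem_separator_of_mem_edges {a : Fin K} {X Y : {C // C ∈ 𝒢}} {w : G.Walk X Y}
    (hw : ∀ Z ∈ w.support, a ∈ Z.1) {e : Sym2 {C // C ∈ 𝒢}} (he : e ∈ w.edges) :
    a ∈ separator e := by
  induction e using Sym2.ind with
  | _ Z₁ Z₂ =>
    refine mem_separator.2 fun Z hZ => hw Z ?_
    rcases Sym2.mem_iff.1 hZ with rfl | rfl
    exacts [w.fst_mem_support_of_mem_edges he, w.snd_mem_support_of_mem_edges he]

namespace IsJunctionTree

theorem exists_isPath_support_mem (hG : IsJunctionTree 𝒢 G) {a : Fin K} {A B : {C // C ∈ 𝒢}}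
    (hA : a ∈ A.1) (hB : a ∈ B.1) : ∃ w : G.Walk A B, w.IsPath ∧ ∀ Z ∈ w.support, a ∈ Z.1 := by
  obtain ⟨w⟩ := hG.2.2.1 A B a hA hB
  exact ⟨w.bypass, w.bypass_isPath, hG.2.2.2 A B a hA hB _ w.bypass_isPath⟩

theorem exists_separator_eq_singleton (hG : IsJunctionTree 𝒢 G) (hcard : ∀ C ∈ 𝒢, #C ≤ 2)
    {e : Sym2 {C // C ∈ 𝒢}} (he : e ∈ G.edgeSet) : ∃ a, separator e = {a} := by
  induction e using Sym2.ind with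
  | _ X Y =>
    obtain ⟨a, ha⟩ := hG.2.1 X Y he
    refine ⟨a, Finset.eq_singleton_iff_unique_mem.2 ⟨ha, fun b hb => ?_⟩⟩
    by_contra hba
    simp only [separator, Sym2.lift_mk, Finset.mem_inter] at ha hb
    refine G.ne_of_adj he (Subtype.ext ?_)
    rw [Finset.eq_pair_of_card_le_two hb.1 ha.1 hba (hcard _ X.2),
      Finset.eq_pair_of_card_le_two hb.2 ha.2 hba (hcard _ Y.2)]

theorem exists_walk_of_walk_pairGraph (hG : IsJunctionTree 𝒢 G) {u v : Fin K}
    (c : (pairGraph 𝒢).Walk u v) {A B : {C // C ∈ 𝒢}} (hA : u ∈ A.1) (hB : v ∈ B.1) :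
    ∃ w : G.Walk A B, ∀ e ∈ w.edges, ∃ x ∈ c.support, x ∈ separator e := by
  induction c generalizing A with
  | nil =>
    obtain ⟨w, -, hw⟩ := hG.exists_isPath_support_mem hA hB
    exact ⟨w, fun e he => ⟨_, Walk.start_mem_support _, mem_separator_of_mem_edges hw he⟩⟩
  | @cons u z v h c ih =>
    set D : {C // C ∈ 𝒢} := ⟨{u, z}, (pairGraph_adj.1 h).1⟩
    obtain ⟨w₁, -, hw₁⟩ := hG.exists_isPath_support_mem hA (show u ∈ D.1 by simp [D])
    obtain ⟨w₂, hw₂⟩ := ih (A := D) (by simp [D]) hB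
    refine ⟨w₁.append w₂, fun e he => ?_⟩
    rcases List.mem_append.1 (Walk.edges_append w₁ w₂ ▸ he) with he | he
    · exact ⟨u, Walk.start_mem_support _, mem_separator_of_mem_edges hw₁ he⟩
    · obtain ⟨x, hx, hxe⟩ := hw₂ e he
      exact ⟨x, by simp [hx], hxe⟩

theorem mem_support_of_adj_of_adj (hG : IsJunctionTree 𝒢 G) (hcard : ∀ C ∈ 𝒢, #C ≤ 2)
    {x₀ x₁ x₂ : Fin K} (h₀₁ : (pairGraph 𝒢).Adj x₀ x₁) (h₁₂ : (pairGraph 𝒢).Adj x₁ x₂)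
    (h₀₂ : x₀ ≠ x₂) (c : (pairGraph 𝒢).Walk x₂ x₀) : x₁ ∈ c.support := by
  by_contra hx₁
  set A₀ : {C // C ∈ 𝒢} := ⟨{x₀, x₁}, (pairGraph_adj.1 h₀₁).1⟩
  set A₁ : {C // C ∈ 𝒢} := ⟨{x₁, x₂}, (pairGraph_adj.1 h₁₂).1⟩
  have hA : A₀ ≠ A₁ := fun h => by
    have : x₀ ∈ ({x₁, x₂} : Finset (Fin K)) := by
      rw [← show ({x₀, x₁} : Finset (Fin K)) = {x₁, x₂} from congrArg Subtype.val h]; simp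
    simp only [Finset.mem_insert, Finset.mem_singleton] at this
    exact this.elim (pairGraph_adj.1 h₀₁).2 h₀₂
  -- The path from `A₀` to `A₁` stays among the cliques containing `x₁`, while no separator on
  -- the lifted walk `W` contains `x₁`; yet in the forest `G` that path lies on `W`.
  obtain ⟨Q, hQ, hQx₁⟩ := hG.exists_isPath_support_mem (a := x₁) (A := A₀) (B := A₁)
    (by simp [A₀]) (by simp [A₁])
  obtain ⟨W, hW⟩ := hG.exists_walk_of_walk_pairGraph c (A := A₁) (B := A₀)
    (by simp [A₁]) (by simp [A₀])
  obtain ⟨Z, hZ, Q', rfl⟩ := Walk.exists_eq_cons_of_ne hA Q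
  have he : s(A₀, Z) ∈ W.edges := by
    have := hG.1.edges_subset_of_isPath hQ W.reverse
      (show s(A₀, Z) ∈ (Walk.cons hZ Q').edges by simp)
    rwa [Walk.edges_reverse, List.mem_reverse] at this
  obtain ⟨x, hx, hxe⟩ := hW _ he
  obtain ⟨b, hb⟩ := hG.exists_separator_eq_singleton hcard (W.edges_subset_edgeSet he)
  have hx₁e : x₁ ∈ separator s(A₀, Z) := mem_separator_of_mem_edges hQx₁ (by simp)
  rw [hb, Finset.mem_singleton] at hxe hx₁e
  exact hx₁ (hx₁e.trans hxe.symm ▸ hx)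

theorem isAcyclic_pairGraph (hG : IsJunctionTree 𝒢 G) (hcard : ∀ C ∈ 𝒢, #C ≤ 2) :
    (pairGraph 𝒢).IsAcyclic := by
  refine isAcyclic_iff_forall_adj_isBridge.2 fun x₀ x₁ h₀₁ => ?_
  refine isBridge_iff_forall_walk_mem_edges.2 fun p => ?_
  by_contra hp
  obtain ⟨x₂, h₁₂, c, hc⟩ := Walk.exists_eq_cons_of_ne h₀₁.ne.symm p.bypass.reverse
  have hpath : (Walk.cons h₁₂ c).IsPath := hc ▸ p.bypass_isPath.reverse
  have h₀₂ : x₀ ≠ x₂ := by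
    rintro rfl
    have : s(x₁, x₀) ∈ p.bypass.reverse.edges := by simp [hc]
    rw [Walk.edges_reverse, List.mem_reverse, Sym2.eq_swap] at this
    exact hp (p.edges_bypass_subset_edges this)
  exact ((Walk.cons_isPath_iff _ _).1 hpath).2 (hG.mem_support_of_adj_of_adj hcard h₀₁ h₁₂ h₀₂ c)

theorem card_filter_mem_separator_add_one (hG : IsJunctionTree 𝒢 G) {a : Fin K}
    (ha : ∃ C ∈ 𝒢, a ∈ C) :
    #{e ∈ G.edgeFinset | a ∈ separator e} + 1 = #{C ∈ 𝒢 | a ∈ C} := by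
  set s : Set {C // C ∈ 𝒢} := {X | a ∈ X.1}
  obtain ⟨C₀, hC₀, haC₀⟩ := ha
  have htree : (G.induce s).IsTree := by
    refine ⟨induce_connected_of_patches ⟨C₀, hC₀⟩ haC₀ fun {Y} hY => ?_, hG.1.induce s⟩
    obtain ⟨w, -, hw⟩ := hG.exists_isPath_support_mem (A := ⟨C₀, hC₀⟩) haC₀ hY
    exact ⟨{Z | Z ∈ w.support}, fun Z hZ => hw Z hZ, w.start_mem_support, w.end_mem_support,
      w.connected_induce_support.preconnected _ _⟩
  have hedges : #(G.induce s).edgeFinset = #{e ∈ G.edgeFinset | a ∈ separator e} := by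
    rw [← Finset.card_map (Function.Embedding.subtype (· ∈ s)).sym2Map, map_edgeFinset_induce]
    congr 1
    ext e
    simp [Finset.mem_sym2_iff, mem_separator, s]
  rw [← hedges, htree.card_edgeFinset, Fintype.card_subtype,
    ← Finset.card_map (Function.Embedding.subtype _)]
  congr 1
  ext C
  simp [s, and_comm]

end IsJunctionTree

end JunctionTree

section Entropy

open SimpleGraph

variable {K : ℕ} {q : (Fin K → Bool) → ℝ}

theorem entX_empty (hq : ∑ v, q v = 1) : entX q ∅ = 0 := by
  simp [entX, hq]

theorem wsum_eq_sum_degree_smul_sub (F : SimpleGraph (Fin K)) :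
    wsum q F = ∑ a, F.degree a • entX q {a} - ∑ e ∈ F.edgeFinset, entX q e.toFinset := by
  rw [← sum_edgeFinset_sum_toFinset, ← Finset.sum_sub_distrib, wsum]
  refine Finset.sum_congr rfl fun e he => ?_
  induction e using Sym2.ind with
  | _ a b =>
    have hab : a ≠ b := F.ne_of_adj (mem_edgeFinset.1 he)
    simp [Sym2.toFinset_mk_eq, Finset.sum_pair hab]

variable {𝒢 : Finset (Finset (Fin K))} {G : SimpleGraph {C // C ∈ 𝒢}}

theorem IsJunctionTree.sum_sepEnt (hG : IsJunctionTree 𝒢 G) (hsingle : ∀ a, {a} ∈ 𝒢)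
    (hcard : ∀ C ∈ 𝒢, #C ≤ 2) :
    ∑ e ∈ G.edgeFinset, sepEnt q e = ∑ a, (pairGraph 𝒢).degree a • entX q {a} := by
  calc ∑ e ∈ G.edgeFinset, sepEnt q e
      = ∑ e ∈ G.edgeFinset, ∑ a ∈ separator e, entX q {a} := by
        refine Finset.sum_congr rfl fun e he => ?_
        obtain ⟨b, hb⟩ := hG.exists_separator_eq_singleton hcard (mem_edgeFinset.1 he)
        rw [sepEnt_eq_entX_separator, hb, Finset.sum_singleton]
    _ = ∑ a, #{e ∈ G.edgeFinset | a ∈ separator e} • entX q {a} :=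
        Finset.sum_sum_eq_sum_card_filter_nsmul _ _ _
    _ = ∑ a, (pairGraph 𝒢).degree a • entX q {a} := by
        refine Finset.sum_congr rfl fun a _ => ?_
        have h := hG.card_filter_mem_separator_add_one ⟨_, hsingle a, mem_singleton_self a⟩
        rw [card_filter_mem_eq_degree_pairGraph_add_one (hsingle a) hcard] at h
        rw [Nat.add_right_cancel h]

theorem IsJunctionTree.treeEnt_eq (hG : IsJunctionTree 𝒢 G) (hq : ∑ v, q v = 1)
    (hsingle : ∀ a, {a} ∈ 𝒢) (hcard : ∀ C ∈ 𝒢, #C ≤ 2) :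
    treeEnt q 𝒢 G = ∑ a, entX q {a} - wsum q (pairGraph 𝒢) := by
  rw [treeEnt, Finset.sum_coe_sort 𝒢 (entX q),
    sum_eq_sum_singleton_add_sum_edgeFinset_pairGraph (entX_empty hq) hsingle hcard,
    hG.sum_sepEnt hsingle hcard, wsum_eq_sum_degree_smul_sub]
  abel

end Entropy

section Subdivision

open SimpleGraph

variable {K : ℕ} {F : SimpleGraph (Fin K)}

theorem mem_famOf {C : Finset (Fin K)} :
    C ∈ famOf F ↔ (∃ a, C = {a}) ∨ ∃ a b, F.Adj a b ∧ C = {a, b} := by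
  simp only [famOf, Finset.mem_union, Finset.mem_image, Finset.mem_univ, true_and,
    Sym2.exists, mem_edgeFinset, mem_edgeSet, Sym2.lift_mk, eq_comm]

theorem singleton_mem_famOf (a : Fin K) : {a} ∈ famOf F :=
  mem_famOf.2 (Or.inl ⟨a, rfl⟩)

theorem card_le_two_of_mem_famOf {C : Finset (Fin K)} (hC : C ∈ famOf F) : #C ≤ 2 := by
  rcases mem_famOf.1 hC with ⟨a, rfl⟩ | ⟨a, b, -, rfl⟩
  · simp
  · exact Finset.card_le_two

theorem nonempty_of_mem_famOf {C : Finset (Fin K)} (hC : C ∈ famOf F) : C.Nonempty := by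
  rcases mem_famOf.1 hC with ⟨a, rfl⟩ | ⟨a, b, -, rfl⟩ <;> simp

theorem pairGraph_famOf (F : SimpleGraph (Fin K)) : pairGraph (famOf F) = F := by
  ext a b
  rw [pairGraph_adj, mem_famOf]
  constructor
  · rintro ⟨⟨c, hc⟩ | ⟨c, d, hcd, h⟩, hab⟩
    · have := congrArg Finset.card hc
      rw [Finset.card_pair hab, Finset.card_singleton] at this
      omega
    · rw [← Sym2.toFinset_mk_eq, ← Sym2.toFinset_mk_eq] at h
      rw [← mem_edgeSet, Sym2.toFinset_injective h]
      exact hcd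
  · exact fun h => ⟨Or.inr ⟨a, b, h, rfl⟩, h.ne⟩

def subdivision (F : SimpleGraph (Fin K)) : SimpleGraph {C // C ∈ famOf F} :=
  SimpleGraph.fromRel fun X Y => X.1 ⊂ Y.1

theorem exists_adj_of_ssubset_famOf {X Y : {C // C ∈ famOf F}} (h : X.1 ⊂ Y.1) :
    ∃ x y, F.Adj x y ∧ X.1 = {x} ∧ Y.1 = {x, y} := by
  have hlt := Finset.card_lt_card h
  have hX := (nonempty_of_mem_famOf X.2).card_pos
  have hY := card_le_two_of_mem_famOf Y.2
  rcases mem_famOf.1 Y.2 with ⟨c, hc⟩ | ⟨c, d, hcd, hc⟩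
  · rw [hc, Finset.card_singleton] at hlt; omega
  obtain ⟨x, hx⟩ := Finset.card_eq_one.1 (show #X.1 = 1 by omega)
  have hxY : x ∈ Y.1 := h.1 (by simp [hx])
  rw [hc, Finset.mem_insert, Finset.mem_singleton] at hxY
  rcases hxY with rfl | rfl
  · exact ⟨x, d, hcd, hx, hc⟩
  · exact ⟨x, c, hcd.symm, hx, hc.trans (Finset.pair_comm _ _)⟩

theorem subdivision_adj {X Y : {C // C ∈ famOf F}} :
    (subdivision F).Adj X Y ↔ X.1 ⊂ Y.1 ∨ Y.1 ⊂ X.1 := by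
  rw [subdivision, fromRel_adj, and_iff_right_iff_imp]
  rintro (h | h) rfl <;> exact h.ne rfl

theorem isBridge_subdivision_of_ssubset (hF : F.IsAcyclic) {X Y : {C // C ∈ famOf F}}
    (hXY : X.1 ⊂ Y.1) : (subdivision F).IsBridge s(X, Y) := by
  obtain ⟨x, y, hxy, hX, hY⟩ := exists_adj_of_ssubset_famOf hXY
  -- Collapse every clique to one of its elements, and the cliques containing `y` to `y`:
  -- walks avoiding the edge `X – Y` then map to walks of `F` avoiding `x – y`.
  choose φ hφ hφy using fun Z : {C // C ∈ famOf F} => show ∃ z ∈ Z.1, y ∈ Z.1 → z = y by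
    by_cases hy : y ∈ Z.1
    · exact ⟨y, hy, fun _ => rfl⟩
    · obtain ⟨z, hz⟩ := nonempty_of_mem_famOf Z.2
      exact ⟨z, hz, fun h => absurd h hy⟩
  have step : ∀ C D : {C // C ∈ famOf F}, C.1 ⊂ D.1 → s(C, D) ≠ s(X, Y) →
      (F.deleteEdges {s(x, y)}).Reachable (φ C) (φ D) := by
    intro C D hCD hne
    obtain ⟨c, d, hcd, hC, hD⟩ := exists_adj_of_ssubset_famOf hCD
    have hφC : φ C = c := by simpa [hC] using hφ C
    by_cases hcdxy : s(c, d) = s(x, y)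
    · rcases Sym2.eq_iff.1 hcdxy with ⟨rfl, rfl⟩ | ⟨rfl, rfl⟩
      · exact absurd (by rw [Subtype.ext (hC.trans hX.symm), Subtype.ext (hD.trans hY.symm)]) hne
      · rw [hφC, hφy D (by simp [hD])]
    · have hφD : φ D = c ∨ φ D = d := by simpa [hD] using hφ D
      rcases hφD with h | h <;> rw [hφC, h]
      exact (deleteEdges_adj.2 ⟨hcd, by simpa using hcdxy⟩).reachable
  rw [isBridge_iff]
  intro hreach
  refine isBridge_iff.1 (isAcyclic_iff_forall_adj_isBridge.1 hF hxy) ?_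
  have hφX : φ X = x := by simpa [hX] using hφ X
  have hφY : φ Y = y := hφy Y (by simp [hY])
  have h := hreach.map_of_forall_adj (H := F.deleteEdges {s(x, y)}) φ fun C D hCD => by
    obtain ⟨hCD, hne⟩ := deleteEdges_adj.1 hCD
    rw [Set.mem_singleton_iff] at hne
    rcases subdivision_adj.1 hCD with h | h
    · exact step C D h hne
    · exact (step D C h (by rwa [Sym2.eq_swap])).symm
  rwa [hφX, hφY] at h

theorem isAcyclic_subdivision (hF : F.IsAcyclic) : (subdivision F).IsAcyclic := by
  refine isAcyclic_iff_forall_adj_isBridge.2 fun X Y hXY => ?_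
  rcases subdivision_adj.1 hXY with h | h
  · exact isBridge_subdivision_of_ssubset hF h
  · exact Sym2.eq_swap ▸ isBridge_subdivision_of_ssubset hF h

theorem exists_walk_subdivision_singleton {a : Fin K} {X : {C // C ∈ famOf F}} (ha : a ∈ X.1) :
    ∃ w : (subdivision F).Walk X ⟨{a}, singleton_mem_famOf a⟩, ∀ Z ∈ w.support, a ∈ Z.1 := by
  by_cases hX : X.1 = {a}
  · obtain rfl : X = ⟨{a}, singleton_mem_famOf a⟩ := Subtype.ext hX
    exact ⟨Walk.nil, by simp⟩
  · have hadj : (subdivision F).Adj X ⟨{a}, singleton_mem_famOf a⟩ :=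
      subdivision_adj.2 (Or.inr (Finset.ssubset_iff_subset_ne.2
        ⟨Finset.singleton_subset_iff.2 ha, Ne.symm hX⟩))
    exact ⟨Walk.cons hadj Walk.nil, by simp [ha]⟩

theorem isJunctionTree_subdivision (hF : F.IsAcyclic) :
    IsJunctionTree (famOf F) (subdivision F) := by
  have hwalk : ∀ (X Y : {C // C ∈ famOf F}) (a : Fin K), a ∈ X.1 → a ∈ Y.1 →
      ∃ w : (subdivision F).Walk X Y, ∀ Z ∈ w.support, a ∈ Z.1 := by
    intro X Y a hX hY
    obtain ⟨w₁, hw₁⟩ := exists_walk_subdivision_singleton hX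
    obtain ⟨w₂, hw₂⟩ := exists_walk_subdivision_singleton hY
    refine ⟨w₁.append w₂.reverse, fun Z hZ => ?_⟩
    rcases (Walk.mem_support_append_iff _ _).1 hZ with h | h
    · exact hw₁ Z h
    · exact hw₂ Z (by simpa using h)
  refine ⟨isAcyclic_subdivision hF, fun X Y hXY => ?_, fun X Y a hX hY => ?_,
    fun X Y a hX hY w hw Z hZ => ?_⟩
  · rcases subdivision_adj.1 hXY with h | h
    · simpa [Finset.inter_eq_left.2 h.1] using nonempty_of_mem_famOf X.2
    · simpa [Finset.inter_eq_right.2 h.1] using nonempty_of_mem_famOf Y.2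
  · obtain ⟨w, -⟩ := hwalk X Y a hX hY
    exact ⟨w⟩
  · obtain ⟨w', hw'⟩ := hwalk X Y a hX hY
    exact hw' Z ((isAcyclic_subdivision hF).support_subset_of_isPath hw w' hZ)

end Subdivision

/-- Chow–Liu: a maximum-weight spanning forest for the mutual information
weights yields the minimum-entropy decomposable family among all downward closed families
with maximal sets of size at most 2. -/
theorem chow_liu {K : ℕ} (q : (Fin K → Bool) → ℝ) (hq : IsDistribution q)
    (F : SimpleGraph (Fin K)) (hF : F.IsAcyclic)
    (hmax : ∀ F' : SimpleGraph (Fin K), F'.IsAcyclic → wsum q F' ≤ wsum q F) :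
    Decomposable (famOf F) ∧
    ∃ GF : SimpleGraph {C // C ∈ famOf F}, IsJunctionTree (famOf F) GF ∧
      treeEnt q (famOf F) GF = (∑ a : Fin K, entX q {a}) - wsum q F ∧
      ∀ 𝒢 : Finset (Finset (Fin K)), DownwardClosed 𝒢 → Covers 𝒢 →
        (∀ X ∈ 𝒢, X.card ≤ 2) →
        ∀ G : SimpleGraph {C // C ∈ 𝒢}, IsJunctionTree 𝒢 G →
          treeEnt q (famOf F) GF ≤ treeEnt q 𝒢 G := by
  have hGF := isJunctionTree_subdivision hF
  have hentF : treeEnt q (famOf F) (subdivision F) = ∑ a, entX q {a} - wsum q F := by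
    rw [hGF.treeEnt_eq hq.2 singleton_mem_famOf fun _ => card_le_two_of_mem_famOf,
      pairGraph_famOf]
  refine ⟨⟨_, hGF⟩, _, hGF, hentF, fun 𝒢 hdown hcover hcard G hG => ?_⟩
  have hsingle : ∀ a, {a} ∈ 𝒢 := fun a => by
    obtain ⟨X, hX, haX⟩ := hcover a
    exact hdown X hX _ (Finset.singleton_subset_iff.2 haX)
  rw [hentF, hG.treeEnt_eq hq.2 hsingle hcard]
  linarith [hmax _ (hG.isAcyclic_pairGraph hcard)]
end
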